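/- Let γ be a numbering and let A, B, C ⊆ ℕ. Suppose γ is (2, A)-divisible and A ≤_T B. If C ≤_γ B, then C ≤_T B. -/

import Mathlib

/-!
Choose `x₀, x₁` and `X₀, X₁` witnessing `(2, A)`-divisibility. The selector `n ↦ x_{χ_C(n)}` is
`C`-computable, so it has a `B`-computable `γ`-lift `g`, and divisibility forces
`g⁻¹(X₁) = C` and `g⁻¹(X₀) = Cᶜ`. Both sets are c.e. in `A`, hence in `B`, so `C` and its
complement are c.e. in `B` and `C ≤_T B` by the relativized Post theorem.

Post's theorem needs stage-wise approximations of `B`-computations: by the use principle, every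
`B`-recursive partial function is the limit of partial computable functions of the finite prefixes
of `χ_B`. A search over prefix lengths and step counts, which `B` can carry out, then decides
which of the two enumerations contains `n`.
-/

open Nat Part

/-- Partial functions on `ℕ` computable relative to an oracle set `A`. -/
inductive RecursiveInSet (A : Set ℕ) : (ℕ →. ℕ) → Prop
  | zero : RecursiveInSet A (pure 0)
  | succ : RecursiveInSet A ↑Nat.succ
  | left : RecursiveInSet A ↑fun n : ℕ => n.unpair.1
  | right : RecursiveInSet A ↑fun n : ℕ => n.unpair.2
  | oracle : RecursiveInSet A ↑fun n : ℕ => A.indicator 1 n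
  | pair {f g} : RecursiveInSet A f → RecursiveInSet A g →
      RecursiveInSet A fun n => Nat.pair <$> f n <*> g n
  | comp {f g} : RecursiveInSet A f → RecursiveInSet A g →
      RecursiveInSet A fun n => g n >>= f
  | prec {f g} : RecursiveInSet A f → RecursiveInSet A g →
      RecursiveInSet A (Nat.unpaired fun a n =>
        n.rec (f a) fun y IH => do let i ← IH; g (Nat.pair a (Nat.pair y i)))
  | rfind {f} : RecursiveInSet A f →
      RecursiveInSet A fun a => Nat.rfind fun n => (fun m => m = 0) <$> f (Nat.pair a n)

/-- A total function `f : ℕ → ℕ` is `A`-computable. -/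
def ComputableInSet (A : Set ℕ) (f : ℕ → ℕ) : Prop :=
  RecursiveInSet A fun n => Part.some (f n)

/-- A total binary function is `A`-computable. -/
def ComputableInSet₂ (A : Set ℕ) (h : ℕ → ℕ → ℕ) : Prop :=
  ComputableInSet A fun n => h n.unpair.1 n.unpair.2

/-- The characteristic function of a set of naturals. -/
noncomputable def chi (A : Set ℕ) : ℕ → ℕ := A.indicator 1

/-- Turing reducibility: `A ≤_T B`. -/
def TuringLE (A B : Set ℕ) : Prop := ComputableInSet B (chi A)

/-- `A` is computable. -/
def SetComputable (A : Set ℕ) : Prop := ComputableInSet ∅ (chi A)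

/-- `X` is computably enumerable in `A`: `X` is the domain of a partial
`A`-computable function. -/
def CEIn (A : Set ℕ) (X : Set ℕ) : Prop :=
  ∃ p : ℕ →. ℕ, RecursiveInSet A p ∧ X = p.Dom

/-- `A ≤_γ B` (`A` is `(γ,B)`-low): every total `A`-computable function has a
`B`-computable `γ`-lift. -/
def GammaLE (γ : ℕ → ℕ → Prop) (A B : Set ℕ) : Prop :=
  ∀ f : ℕ → ℕ, ComputableInSet A f →
    ∃ g : ℕ → ℕ, ComputableInSet B g ∧ ∀ n, γ (f n) (g n)

/-- `A` is `γ`-low: `A ≤_γ ∅`. -/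
def GammaLow (γ : ℕ → ℕ → Prop) (A : Set ℕ) : Prop := GammaLE γ A ∅

/-- `γ` is `(n, A)`-divisible (for finite `n`). -/
def DivisibleFin (γ : ℕ → ℕ → Prop) (n : ℕ) (A : Set ℕ) : Prop :=
  ∃ (x : Fin n → ℕ) (X : Fin n → Set ℕ),
    (∀ i, CEIn A (X i)) ∧
    (∀ i, {m | γ (x i) m} ⊆ X i) ∧
    (∀ i j, i ≠ j → {m | γ (x i) m} ∩ X j = ∅)

/-- `γ` is `(ω, A)`-divisible. -/
def DivisibleOmega (γ : ℕ → ℕ → Prop) (A : Set ℕ) : Prop :=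
  ∃ (x : ℕ → ℕ) (X : ℕ → Set ℕ),
    ComputableInSet A x ∧
    CEIn A {k : ℕ | k.unpair.2 ∈ X k.unpair.1} ∧
    (∀ i, {m | γ (x i) m} ⊆ X i) ∧
    (∀ i j, i ≠ j → {m | γ (x i) m} ∩ X j = ∅)

/-- `γ` is `A`-precomplete: every partial `A`-computable function has a total
`A`-computable totalization modulo `γ`. -/
def PrecompleteIn (γ : ℕ → ℕ → Prop) (A : Set ℕ) : Prop :=
  ∀ ψ : ℕ →. ℕ, RecursiveInSet A ψ →
    ∃ f : ℕ → ℕ, ComputableInSet A f ∧ ∀ n, ∀ y ∈ ψ n, γ y (f n)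

/-- `γ` is a c.e. numbering. -/
def CENumbering (γ : ℕ → ℕ → Prop) : Prop :=
  CEIn ∅ {k : ℕ | γ k.unpair.1 k.unpair.2}

/-- The `e`-th partial computable function. -/
def phi (e : ℕ) : ℕ →. ℕ := (Denumerable.ofNat Nat.Partrec.Code e).eval

/-- The `e`-th computably enumerable set. -/
def Wset (e : ℕ) : Set ℕ := (phi e).Dom

/-- The halting set `∅'`. -/
def halting : Set ℕ := {e : ℕ | (phi e e).Dom}

open Encodable Denumerable

theorem chi_of_mem {S : Set ℕ} {n : ℕ} (hn : n ∈ S) : chi S n = 1 := by simp [chi, hn]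

theorem chi_of_notMem {S : Set ℕ} {n : ℕ} (hn : n ∉ S) : chi S n = 0 := by simp [chi, hn]

-- In `RecursiveInSet.oracle`, `A.indicator 1 n` is elaborated in `Part ℕ`.
theorem indicator_eq_some_chi (A : Set ℕ) :
    (fun n : ℕ => A.indicator 1 n : ℕ →. ℕ) = fun n => Part.some (chi A n) := by
  ext1 n
  by_cases hn : n ∈ A <;> simp [chi, hn] <;> rfl

namespace RecursiveInSet

variable {A B : Set ℕ}

theorem of_eq {f g : ℕ →. ℕ} (hf : RecursiveInSet A f) (H : ∀ n, f n = g n) :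
    RecursiveInSet A g :=
  funext H ▸ hf

theorem of_partrec {f : ℕ →. ℕ} (hf : Nat.Partrec f) : RecursiveInSet A f := by
  induction hf with
  | zero => exact .zero
  | succ => exact .succ
  | left => exact .left
  | right => exact .right
  | pair _ _ ihf ihg => exact .pair ihf ihg
  | comp _ _ ihf ihg => exact .comp ihf ihg
  | prec _ _ ihf ihg => exact .prec ihf ihg
  | rfind _ ih => exact .rfind ih

theorem mono (hAB : TuringLE A B) {f : ℕ →. ℕ} (hf : RecursiveInSet A f) :
    RecursiveInSet B f := by
  induction hf with
  | zero => exact .zero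
  | succ => exact .succ
  | left => exact .left
  | right => exact .right
  | oracle => exact indicator_eq_some_chi A ▸ hAB
  | pair _ _ ihf ihg => exact .pair ihf ihg
  | comp _ _ ihf ihg => exact .comp ihf ihg
  | prec _ _ ihf ihg => exact .prec ihf ihg
  | rfind _ ih => exact .rfind ih

end RecursiveInSet

namespace ComputableInSet

variable {A : Set ℕ} {f g : ℕ → ℕ}

theorem of_eq (hf : ComputableInSet A f) (H : ∀ n, f n = g n) : ComputableInSet A g :=
  funext H ▸ hf

theorem of_computable (hf : Computable f) : ComputableInSet A f :=
  RecursiveInSet.of_partrec (Partrec.nat_iff.1 hf)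

theorem chi_self : ComputableInSet A (chi A) :=
  (indicator_eq_some_chi A ▸ RecursiveInSet.oracle : RecursiveInSet A fun n => Part.some (chi A n))

theorem comp (hf : ComputableInSet A f) (hg : ComputableInSet A g) :
    ComputableInSet A fun n => f (g n) := by
  simpa [ComputableInSet] using RecursiveInSet.comp hf hg

theorem pair (hf : ComputableInSet A f) (hg : ComputableInSet A g) :
    ComputableInSet A fun n => Nat.pair (f n) (g n) := by
  simpa [ComputableInSet, Seq.seq] using RecursiveInSet.pair hf hg

theorem comp₂ {h : ℕ → ℕ → ℕ} (hh : Computable₂ h) (hf : ComputableInSet A f)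
    (hg : ComputableInSet A g) : ComputableInSet A fun n => h (f n) (g n) := by
  have hh' : Computable fun m : ℕ => h m.unpair.1 m.unpair.2 :=
    hh.comp (Computable.fst.comp Computable.unpair) (Computable.snd.comp Computable.unpair)
  simpa using (of_computable hh').comp (hf.pair hg)

theorem nat_rec {u : ℕ → ℕ} {h : ℕ → ℕ → ℕ} (hh : ComputableInSet₂ A h)
    (hu : ∀ n, u (n + 1) = h n (u n)) : ComputableInSet A u := by
  have hprec := RecursiveInSet.prec (A := A) (f := fun _ => Part.some (u 0))
    (g := fun m => Part.some (h m.unpair.2.unpair.1 m.unpair.2.unpair.2))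
    (of_computable (Computable.const _))
    (hh.comp (of_computable (Computable.snd.comp Computable.unpair)))
  have hrec : ∀ n, (n.rec (Part.some (u 0)) fun y IH => IH.bind fun i =>
      Part.some (h y i) : Part ℕ) = Part.some (u n) := by
    intro n
    induction n with
    | zero => rfl
    | succ n ih => exact (congrArg (Part.bind · _) ih).trans (by simp [hu])
  have hpair : ComputableInSet A fun n => Nat.pair 0 n :=
    of_computable (Primrec₂.natPair.to_comp.comp (Computable.const 0) Computable.id)
  simpa [ComputableInSet, Nat.unpaired, hrec] using RecursiveInSet.comp hprec hpair

theorem find {q : ℕ → ℕ → ℕ} (hq : ComputableInSet₂ A q) (hex : ∀ n, ∃ k, q n k = 0) :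
    ComputableInSet A fun n => Nat.find (hex n) := by
  refine (RecursiveInSet.rfind hq).of_eq fun n => Part.eq_some_iff.2 (Nat.mem_rfind.2 ⟨?_, ?_⟩)
  · simpa using Nat.find_spec (hex n)
  · intro m hm
    simpa using Nat.find_min (hex n) hm

end ComputableInSet

noncomputable def oraclePrefix (B : Set ℕ) (s : ℕ) : List ℕ := (List.range s).map (chi B)

theorem oraclePrefix_getElem? (B : Set ℕ) (s n : ℕ) :
    (oraclePrefix B s)[n]? = if n < s then Option.some (chi B n) else Option.none := by
  by_cases h : n < s <;> simp [oraclePrefix, h]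

theorem oraclePrefix_succ (B : Set ℕ) (s : ℕ) :
    oraclePrefix B (s + 1) = oraclePrefix B s ++ [chi B s] := by
  simp [oraclePrefix, List.range_succ]

namespace ComputableInSet

theorem encode_oraclePrefix {B : Set ℕ} :
    ComputableInSet B fun s => encode (oraclePrefix B s) := by
  have happend : Computable₂ fun (c b : ℕ) => encode (ofNat (List ℕ) c ++ [b]) :=
    Computable.encode.comp₂ (Computable.list_concat.comp₂
      ((Computable.ofNat (List ℕ)).comp₂ Computable.fst) Computable.snd)
  refine nat_rec (h := fun s c => encode (ofNat (List ℕ) c ++ [chi B s])) ?_ fun s => ?_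
  · exact comp₂ happend (of_computable (Computable.snd.comp Computable.unpair))
      (chi_self.comp (of_computable (Computable.fst.comp Computable.unpair)))
  · simp [oraclePrefix_succ]

theorem comp_oraclePrefix {B : Set ℕ} {F : List ℕ → ℕ → ℕ} (hF : Computable₂ F)
    {s t : ℕ → ℕ} (hs : ComputableInSet B s) (ht : ComputableInSet B t) :
    ComputableInSet B fun n => F (oraclePrefix B (s n)) (t n) := by
  have hF' : Computable₂ fun c n => F (ofNat (List ℕ) c) n :=
    hF.comp ((Computable.ofNat (List ℕ)).comp Computable.fst) Computable.snd
  simpa using comp₂ hF' (encode_oraclePrefix.comp hs) ht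

end ComputableInSet

theorem Part.bind_le_bind {α β : Type*} {o o' : Part α} {g g' : α → Part β} (ho : o ≤ o')
    (hg : ∀ a, g a ≤ g' a) : o.bind g ≤ o'.bind g' := fun x hx =>
  let ⟨a, ha, hx⟩ := Part.mem_bind_iff.1 hx
  Part.mem_bind_iff.2 ⟨a, ho a ha, hg a x hx⟩

theorem Part.mem_pair_seq_iff {a b : Part ℕ} {x : ℕ} :
    x ∈ Nat.pair <$> a <*> b ↔ ∃ i ∈ a, ∃ j ∈ b, Nat.pair i j = x := by
  simp [Seq.seq]

theorem Part.pair_seq_le_pair_seq {a a' b b' : Part ℕ} (ha : a ≤ a') (hb : b ≤ b') :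
    Nat.pair <$> a <*> b ≤ Nat.pair <$> a' <*> b' := fun _ hx =>
  let ⟨i, hi, j, hj, hx⟩ := Part.mem_pair_seq_iff.1 hx
  Part.mem_pair_seq_iff.2 ⟨i, ha i hi, j, hb j hj, hx⟩

theorem Nat.mem_rfind_of_forall_le {p q : ℕ →. Bool} {x : ℕ} (hx : x ∈ Nat.rfind p)
    (h : ∀ m ≤ x, p m ≤ q m) : x ∈ Nat.rfind q :=
  Nat.mem_rfind.2 ⟨h x le_rfl _ (Nat.mem_rfind.1 hx).1,
    fun hm => h _ hm.le _ ((Nat.mem_rfind.1 hx).2 hm)⟩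

theorem Nat.rfind_mono {p q : ℕ →. Bool} (h : ∀ n, p n ≤ q n) : Nat.rfind p ≤ Nat.rfind q :=
  fun _ hx => Nat.mem_rfind_of_forall_le hx fun m _ => h m

theorem Nat.dom_of_mem_rfind {p : ℕ →. Bool} {x m : ℕ} (hx : x ∈ Nat.rfind p) (hm : m ≤ x) :
    (p m).Dom := by
  rcases hm.lt_or_eq with hm | rfl
  · exact Part.dom_iff_mem.2 ⟨false, (Nat.mem_rfind.1 hx).2 hm⟩
  · exact Part.dom_iff_mem.2 ⟨true, (Nat.mem_rfind.1 hx).1⟩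

theorem Part.map_le_map {α β : Type*} (g : α → β) {o o' : Part α} (h : o ≤ o') :
    o.map g ≤ o'.map g := fun _ hb =>
  let ⟨a, ha, hab⟩ := (Part.mem_map_iff g).1 hb
  (Part.mem_map_iff g).2 ⟨a, h a ha, hab⟩

def Part.primRec (f g : ℕ →. ℕ) (a n : ℕ) : Part ℕ :=
  n.rec (f a) fun y IH => IH >>= fun i => g (Nat.pair a (Nat.pair y i))

theorem Part.primRec_mono {f f' g g' : ℕ →. ℕ} (hf : ∀ n, f n ≤ f' n) (hg : ∀ n, g n ≤ g' n)
    (a n : ℕ) : Part.primRec f g a n ≤ Part.primRec f' g' a n := by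
  induction n with
  | zero => exact hf a
  | succ n ih => exact Part.bind_le_bind ih fun i => hg _

-- `P l` is meant to run the computation of `p` with the oracle answers read off the table `l`.
structure PrefixApprox (B : Set ℕ) (p : ℕ →. ℕ) (P : List ℕ → ℕ →. ℕ) : Prop where
  partrec : Partrec₂ P
  mono (n : ℕ) : Monotone fun s => P (oraclePrefix B s) n
  mem_iff (n x : ℕ) : x ∈ p n ↔ ∃ s, x ∈ P (oraclePrefix B s) n

namespace PrefixApprox

variable {B : Set ℕ} {f g : ℕ →. ℕ} {F G : List ℕ → ℕ →. ℕ}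

theorem le (hf : PrefixApprox B f F) (s n : ℕ) : F (oraclePrefix B s) n ≤ f n :=
  fun x hx => (hf.mem_iff n x).2 ⟨s, hx⟩

theorem of_partrec (hf : Nat.Partrec f) : PrefixApprox B f fun _ => f where
  partrec := (Partrec.nat_iff.2 hf).comp Computable.snd
  mono _ := monotone_const
  mem_iff _ _ := ⟨fun h => ⟨0, h⟩, fun ⟨_, h⟩ => h⟩

theorem oracle : PrefixApprox B (fun n => Part.some (chi B n)) fun l n => l[n]? where
  partrec := Computable.list_getElem?.ofOption
  mono n s t hst x hx := by
    simp only [Part.mem_coe, oraclePrefix_getElem?] at hx ⊢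
    split_ifs at hx with hn
    · rwa [if_pos (hn.trans_le hst)]
    · simp at hx
  mem_iff n x := by
    simp only [Part.mem_some_iff, Part.mem_coe, oraclePrefix_getElem?]
    refine ⟨fun hx => ⟨n + 1, by simp [hx]⟩, fun ⟨s, hs⟩ => ?_⟩
    split_ifs at hs
    · exact (Option.some_inj.1 hs).symm
    · simp at hs

theorem pair (hf : PrefixApprox B f F) (hg : PrefixApprox B g G) :
    PrefixApprox B (fun n => Nat.pair <$> f n <*> g n) fun l n => Nat.pair <$> F l n <*> G l n where
  partrec := by
    have hG : Partrec₂ fun (q : List ℕ × ℕ) (i : ℕ) => (G q.1 q.2).map (Nat.pair i) :=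
      (hg.partrec.comp (Computable.fst.comp Computable.fst)
        (Computable.snd.comp Computable.fst)).map
        (Primrec₂.natPair.to_comp.comp (Computable.snd.comp Computable.fst) Computable.snd)
    refine (hf.partrec.bind hG).of_eq fun q => Part.ext fun x => ?_
    rw [Part.mem_pair_seq_iff]
    simp [eq_comm]
  mono n _ _ hst := Part.pair_seq_le_pair_seq (hf.mono n hst) (hg.mono n hst)
  mem_iff n x := by
    refine ⟨fun hx => ?_, fun ⟨s, hx⟩ => Part.pair_seq_le_pair_seq (hf.le s n) (hg.le s n) x hx⟩
    obtain ⟨i, hi, j, hj, rfl⟩ := Part.mem_pair_seq_iff.1 hx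
    obtain ⟨s, hi⟩ := (hf.mem_iff n i).1 hi
    obtain ⟨t, hj⟩ := (hg.mem_iff n j).1 hj
    exact ⟨max s t, Part.mem_pair_seq_iff.2
      ⟨i, hf.mono n (le_max_left s t) i hi, j, hg.mono n (le_max_right s t) j hj, rfl⟩⟩

theorem comp (hf : PrefixApprox B f F) (hg : PrefixApprox B g G) :
    PrefixApprox B (fun n => g n >>= f) fun l n => G l n >>= F l where
  partrec := hg.partrec.bind (hf.partrec.comp (Computable.fst.comp Computable.fst) Computable.snd)
  mono n _ _ hst := Part.bind_le_bind (hg.mono n hst) fun a => hf.mono a hst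
  mem_iff n x := by
    refine ⟨fun hx => ?_, fun ⟨s, hx⟩ => Part.bind_le_bind (hg.le s n) (hf.le s) x hx⟩
    obtain ⟨a, ha, hx⟩ := Part.mem_bind_iff.1 hx
    obtain ⟨s, ha⟩ := (hg.mem_iff n a).1 ha
    obtain ⟨t, hx⟩ := (hf.mem_iff a x).1 hx
    exact ⟨max s t, Part.mem_bind_iff.2
      ⟨a, hg.mono n (le_max_left s t) a ha, hf.mono a (le_max_right s t) x hx⟩⟩

theorem prec (hf : PrefixApprox B f F) (hg : PrefixApprox B g G) :
    PrefixApprox B (Nat.unpaired (Part.primRec f g))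
      fun l => Nat.unpaired (Part.primRec (F l) (G l)) where
  partrec := by
    have hstep : Partrec₂ fun (q : List ℕ × ℕ) (yi : ℕ × ℕ) =>
        G q.1 (Nat.pair q.2.unpair.1 (Nat.pair yi.1 yi.2)) :=
      hg.partrec.comp (Computable.fst.comp Computable.fst)
        (Primrec₂.natPair.to_comp.comp
          (Computable.fst.comp (Computable.unpair.comp (Computable.snd.comp Computable.fst)))
          (Primrec₂.natPair.to_comp.comp (Computable.fst.comp Computable.snd)
            (Computable.snd.comp Computable.snd)))
    exact (Partrec.nat_rec (Computable.snd.comp (Computable.unpair.comp Computable.snd))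
      (hf.partrec.comp Computable.fst (Computable.fst.comp (Computable.unpair.comp Computable.snd)))
      hstep).of_eq fun _ => rfl
  mono m _ _ hst :=
    Part.primRec_mono (fun a => hf.mono a hst) (fun b => hg.mono b hst) m.unpair.1 m.unpair.2
  mem_iff m x := by
    refine ⟨fun hx => ?_, fun ⟨s, hx⟩ => Part.primRec_mono (hf.le s) (hg.le s) _ _ x hx⟩
    simp only [Nat.unpaired] at hx ⊢
    generalize m.unpair.1 = a, m.unpair.2 = n at hx ⊢
    induction n generalizing x with
    | zero => exact (hf.mem_iff a x).1 hx
    | succ n ih =>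
      obtain ⟨i, hi, hx⟩ := Part.mem_bind_iff.1 hx
      obtain ⟨s, hi⟩ := ih i hi
      obtain ⟨t, hx⟩ := (hg.mem_iff _ x).1 hx
      refine ⟨max s t, Part.mem_bind_iff.2 ⟨i, ?_, hg.mono _ (le_max_right s t) x hx⟩⟩
      exact Part.primRec_mono (fun a => hf.mono a (le_max_left s t))
        (fun b => hg.mono b (le_max_left s t)) a n i hi

theorem exists_le_of_dom (hf : PrefixApprox B f F) {c : ℕ → ℕ} {k : ℕ}
    (hdom : ∀ m ≤ k, (f (c m)).Dom) : ∃ s, ∀ m ≤ k, f (c m) ≤ F (oraclePrefix B s) (c m) := by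
  have hstage : ∀ m ≤ k, ∃ s, f (c m) ≤ F (oraclePrefix B s) (c m) := by
    intro m hm
    obtain ⟨s, hs⟩ := (hf.mem_iff _ _).1 (Part.get_mem (hdom m hm))
    exact ⟨s, fun w hw => Part.mem_unique (Part.get_mem _) hw ▸ hs⟩
  choose! stage hstage using hstage
  refine ⟨(Finset.range (k + 1)).sup stage, fun m hm w hw => hf.mono _ ?_ w (hstage m hm w hw)⟩
  exact Finset.le_sup (Finset.mem_range_succ_iff.2 hm)

theorem rfind (hf : PrefixApprox B f F) :
    PrefixApprox B (fun a => Nat.rfind fun n => (fun m => m = 0) <$> f (Nat.pair a n))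
      fun l a => Nat.rfind fun n => (fun m => m = 0) <$> F l (Nat.pair a n) where
  partrec := Partrec.rfind ((hf.partrec.comp (Computable.fst.comp Computable.fst)
    (Primrec₂.natPair.to_comp.comp (Computable.snd.comp Computable.fst) Computable.snd)).map
    (Primrec.eq.comp Primrec.snd (Primrec.const 0)).decide.to_comp.to₂)
  mono a _ _ hst := Nat.rfind_mono fun n => Part.map_le_map _ (hf.mono _ hst)
  mem_iff a x := by
    refine ⟨fun hx => ?_, fun ⟨s, hx⟩ =>
      Nat.rfind_mono (fun n => Part.map_le_map _ (hf.le s _)) x hx⟩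
    obtain ⟨s, hs⟩ := hf.exists_le_of_dom (c := Nat.pair a) fun m hm => Nat.dom_of_mem_rfind hx hm
    exact ⟨s, Nat.mem_rfind_of_forall_le hx fun m hm => Part.map_le_map _ (hs m hm)⟩

end PrefixApprox

theorem RecursiveInSet.exists_prefixApprox {B : Set ℕ} {p : ℕ →. ℕ} (hp : RecursiveInSet B p) :
    ∃ P, PrefixApprox B p P := by
  induction hp with
  | zero => exact ⟨_, .of_partrec .zero⟩
  | succ => exact ⟨_, .of_partrec .succ⟩
  | left => exact ⟨_, .of_partrec .left⟩
  | right => exact ⟨_, .of_partrec .right⟩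
  | oracle => exact ⟨_, (indicator_eq_some_chi B).symm ▸ PrefixApprox.oracle⟩
  | pair _ _ ihf ihg => exact ⟨_, ihf.choose_spec.pair ihg.choose_spec⟩
  | comp _ _ ihf ihg => exact ⟨_, ihf.choose_spec.comp ihg.choose_spec⟩
  | prec _ _ ihf ihg => exact ⟨_, ihf.choose_spec.prec ihg.choose_spec⟩
  | rfind _ ih => exact ⟨_, ih.choose_spec.rfind⟩

theorem Partrec.exists_computable₂_dom_iff {α σ : Type*} [Primcodable α] [Primcodable σ]
    {f : α →. σ} (hf : Partrec f) :
    ∃ g : α → ℕ → Bool, Computable₂ g ∧ ∀ a, (f a).Dom ↔ ∃ k, g a k = true := by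
  obtain ⟨c, hc⟩ := Nat.Partrec.Code.exists_code.1 hf
  refine ⟨fun a k => (c.evaln k (encode a)).isSome, ?_, fun a => ?_⟩
  · exact Primrec.option_isSome.to_comp.comp (Nat.Partrec.Code.primrec_evaln.to_comp.comp
      ((Computable.snd.pair (Computable.const c)).pair (Computable.encode.comp Computable.fst)))
  · have hdom : (f a).Dom ↔ (c.eval (encode a)).Dom := by simp [hc, encodek]
    rw [hdom, Part.dom_iff_mem]
    simp only [Nat.Partrec.Code.evaln_complete, Option.mem_def, Option.isSome_iff_exists]
    exact exists_comm

theorem CEIn.exists_stages {B X : Set ℕ} (hX : CEIn B X) :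
    ∃ g : List ℕ × ℕ → ℕ → Bool, Computable₂ g ∧
      ∀ n, n ∈ X ↔ ∃ s k, g (oraclePrefix B s, n) k = true := by
  obtain ⟨p, hp, rfl⟩ := hX
  obtain ⟨P, hP⟩ := hp.exists_prefixApprox
  obtain ⟨g, hg, hdom⟩ := hP.partrec.exists_computable₂_dom_iff
  refine ⟨g, hg, fun n => ?_⟩
  rw [PFun.mem_dom]
  simp only [hP.mem_iff]
  rw [exists_comm]
  simp only [← Part.dom_iff_mem, ← hdom]

namespace CEIn

variable {A B X : Set ℕ}

theorem mono (hAB : TuringLE A B) (hX : CEIn A X) : CEIn B X :=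
  let ⟨p, hp, hX⟩ := hX
  ⟨p, hp.mono hAB, hX⟩

theorem preimage {g : ℕ → ℕ} (hg : ComputableInSet B g) (hX : CEIn B X) : CEIn B (g ⁻¹' X) := by
  obtain ⟨p, hp, rfl⟩ := hX
  refine ⟨_, hp.comp hg, Set.ext fun n => ?_⟩
  show (p (g n)).Dom ↔ (Part.some (g n) >>= p).Dom
  rw [show Part.some (g n) >>= p = p (g n) from Part.bind_some _ _]

end CEIn

theorem exists_computableInSet_stage {B : Set ℕ} {T : List ℕ × ℕ → ℕ → Bool}
    (hT : Computable₂ T) (hex : ∀ n, ∃ s k, T (oraclePrefix B s, n) k = true) :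
    ∃ s k : ℕ → ℕ, ComputableInSet B s ∧ ComputableInSet B k ∧
      ∀ n, T (oraclePrefix B (s n), n) (k n) = true := by
  -- search for `m = ⟪s, k⟫`; the test below receives `⟪n, m⟫`
  have hex' : ∀ n, ∃ m : ℕ, cond (T (oraclePrefix B m.unpair.1, n) m.unpair.2) 0 1 = 0 := by
    intro n
    obtain ⟨s, k, h⟩ := hex n
    exact ⟨Nat.pair s k, by simp [h]⟩
  have hfind : ComputableInSet B fun n => Nat.find (hex' n) := by
    refine ComputableInSet.find ?_ hex'
    have hT' : Computable₂ fun (l : List ℕ) (m : ℕ) =>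
        cond (T (l, m.unpair.1) m.unpair.2.unpair.2) 0 1 :=
      Computable.cond (hT.comp (Computable.fst.pair
        (Computable.fst.comp (Computable.unpair.comp Computable.snd)))
        (Computable.snd.comp (Computable.unpair.comp
          (Computable.snd.comp (Computable.unpair.comp Computable.snd)))))
        (Computable.const 0) (Computable.const 1)
    exact ComputableInSet.comp_oraclePrefix hT' (ComputableInSet.of_computable
      (Computable.fst.comp (Computable.unpair.comp (Computable.snd.comp Computable.unpair))))
      (ComputableInSet.of_computable Computable.id)
  refine ⟨_, _, (ComputableInSet.of_computable (Computable.fst.comp Computable.unpair)).comp hfind,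
    (ComputableInSet.of_computable (Computable.snd.comp Computable.unpair)).comp hfind, fun n => ?_⟩
  have hspec := Nat.find_spec (hex' n)
  revert hspec
  cases T _ _ <;> simp

theorem turingLE_of_ceIn_of_ceIn_compl {B S : Set ℕ} (hS : CEIn B S) (hSc : CEIn B Sᶜ) :
    TuringLE S B := by
  obtain ⟨g₁, hg₁, hS⟩ := hS.exists_stages
  obtain ⟨g₀, hg₀, hSc⟩ := hSc.exists_stages
  obtain ⟨s, k, hs, hk, hsk⟩ := exists_computableInSet_stage (B := B)
    (T := fun q j => g₁ q j || g₀ q j) (Primrec.or.to_comp.comp₂ hg₁ hg₀) fun n => by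
      by_cases hn : n ∈ S
      · obtain ⟨s, k, h⟩ := (hS n).1 hn
        exact ⟨s, k, by simp [h]⟩
      · obtain ⟨s, k, h⟩ := (hSc n).1 hn
        exact ⟨s, k, by simp [h]⟩
  have hg₁' : Computable₂ fun (l : List ℕ) (m : ℕ) => cond (g₁ (l, m.unpair.1) m.unpair.2) 1 0 :=
    Computable.cond (hg₁.comp (Computable.fst.pair
      (Computable.fst.comp (Computable.unpair.comp Computable.snd)))
      (Computable.snd.comp (Computable.unpair.comp Computable.snd)))
      (Computable.const 1) (Computable.const 0)
  refine (ComputableInSet.comp_oraclePrefix hg₁' hs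
    ((ComputableInSet.of_computable Computable.id).pair hk)).of_eq fun n => ?_
  simp only [id, Nat.unpair_pair]
  cases h₁ : g₁ (oraclePrefix B (s n), n) (k n)
  · have h₀ : g₀ (oraclePrefix B (s n), n) (k n) = true := by simpa [h₁] using hsk n
    simp [chi_of_notMem ((hSc n).2 ⟨_, _, h₀⟩)]
  · simp [chi_of_mem ((hS n).2 ⟨_, _, h₁⟩)]

theorem mem_iff_eq_of_separates {γ : ℕ → ℕ → Prop} {k : ℕ} {x : Fin k → ℕ} {X : Fin k → Set ℕ}
    (hsub : ∀ i, {m | γ (x i) m} ⊆ X i) (hdisj : ∀ i j, i ≠ j → {m | γ (x i) m} ∩ X j = ∅)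
    {i j : Fin k} {m : ℕ} (hm : γ (x i) m) : m ∈ X j ↔ i = j := by
  refine ⟨fun hj => ?_, fun hij => hij ▸ hsub i hm⟩
  by_contra hij
  exact (hdisj i j hij).subset ⟨hm, hj⟩

theorem turingLE_of_gammaLE_upper_general (γ : ℕ → ℕ → Prop)
    (A B C : Set ℕ) (hdiv : DivisibleFin γ 2 A) (hAB : TuringLE A B)
    (h : GammaLE γ C B) : TuringLE C B := by
  classical
  obtain ⟨x, X, hce, hsub, hdisj⟩ := hdiv
  have hsel : ComputableInSet C fun n => x (if n ∈ C then 1 else 0) := by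
    have hx : Computable fun b : ℕ => if b = 1 then x 1 else x 0 :=
      (Primrec.ite (Primrec.eq.comp Primrec.id (Primrec.const 1))
        (Primrec.const _) (Primrec.const _)).to_comp
    refine ((ComputableInSet.of_computable hx).comp ComputableInSet.chi_self).of_eq fun n => ?_
    by_cases hn : n ∈ C <;> simp [hn, chi_of_mem, chi_of_notMem]
  obtain ⟨g, hgB, hlift⟩ := h _ hsel
  have hpre : ∀ j, g ⁻¹' X j = {n | (if n ∈ C then 1 else 0) = j} := fun j =>
    Set.ext fun n => mem_iff_eq_of_separates hsub hdisj (hlift n)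
  have hC : g ⁻¹' X 1 = C := by
    ext n
    by_cases hn : n ∈ C <;> simp [hpre, hn]
  have hCc : g ⁻¹' X 0 = Cᶜ := by
    ext n
    by_cases hn : n ∈ C <;> simp [hpre, hn]
  exact turingLE_of_ceIn_of_ceIn_compl (hC ▸ ((hce 1).mono hAB).preimage hgB)
    (hCc ▸ ((hce 0).mono hAB).preimage hgB)

/-- If `γ` is `(2, A)`-divisible, `A ≤_T B` and `C ≤_γ B`,
then `C ≤_T B`. -/
theorem turingLE_of_gammaLE_upper (γ : ℕ → ℕ → Prop) (hγ : Equivalence γ)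
    (A B C : Set ℕ) (hdiv : DivisibleFin γ 2 A) (hAB : TuringLE A B)
    (h : GammaLE γ C B) : TuringLE C B :=
  turingLE_of_gammaLE_upper_general γ A B C hdiv hAB h
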